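/- arXiv:2009.12787 — 2 statements merged into one kernel-verified Lean document; each statement's English description precedes it below -/
import Mathlib

section
/- Under the hypotheses of the previous recursion bound with ρ = 2/μ and γ ≥ max(H, 8L/μ), if additionally F is L-smooth and δ_t = E‖θ̄_t - θ*‖² where θ* minimizes F, then E[F(θ̄_t)] - F(θ*) ≤ (L/2)·ν/(t+γ) = 2L·max(4C, μ²γδ_0)/(μ²(t+γ)). -/
open MeasureTheory ProbabilityTheory
open scoped RealInnerProductSpace

private lemma rec_step_bound {nu g dn : ℝ} (hnu : 0 ≤ nu) (hg : 1 ≤ g)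
    (hd0 : 0 ≤ dn) (ih : dn ≤ 4 * nu / g) :
    (1 - 2 / g) * dn + nu / g ^ 2 ≤ 4 * nu / (g + 1) := by
  have hg0 : (0:ℝ) < g := by linarith
  rcases le_or_gt 2 g with hg2 | hg2
  · have hfac : 0 ≤ 1 - 2 / g := by
      rw [sub_nonneg, div_le_one hg0]; exact hg2
    have h1 : (1 - 2 / g) * dn ≤ (1 - 2 / g) * (4 * nu / g) :=
      mul_le_mul_of_nonneg_left ih hfac
    have heq2 : (1 - 2 / g) * (4 * nu / g) + nu / g ^ 2 = (4 * g - 7) * nu / g ^ 2 := by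
      field_simp; ring
    have h2 : (4 * g - 7) * nu / g ^ 2 ≤ 4 * nu / (g + 1) := by
      rw [div_le_div_iff₀ (by positivity) (by positivity)]
      nlinarith [mul_nonneg hnu hg0.le]
    linarith
  · have hfac : 1 - 2 / g < 0 := by
      rw [sub_neg, lt_div_iff₀ hg0]; linarith
    have h1 : (1 - 2 / g) * dn ≤ 0 :=
      mul_nonpos_of_nonpos_of_nonneg hfac.le hd0
    have h2 : nu / g ^ 2 ≤ 4 * nu / (g + 1) := by
      rw [div_le_div_iff₀ (by positivity) (by positivity)]
      nlinarith [mul_nonneg hnu (by nlinarith : (0:ℝ) ≤ 4 * g ^ 2 - g - 1)]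
    linarith

/-- Theorem 2 of the paper: combining the recursion bound (with `ρ = 2/μ`,
`γ ≥ max(H, 8L/μ)`) with `L`-smoothness of `F` at its minimizer `θ*` gives
`E[F(θ̄_t)] - F(θ*) ≤ 2L·max(4C, μ²γδ₀)/(μ²(t+γ))`. -/
theorem smoothness_convergence_bound (d H : ℕ) (hH : 0 < H)
    (L μ γ C : ℝ) (hL : 0 < L) (hμ : 0 < μ) (hC : 0 ≤ C)
    (hγ : max (H : ℝ) (8 * L / μ) ≤ γ)
    {Ω : Type*} [MeasurableSpace Ω] (P : Measure Ω) [IsProbabilityMeasure P]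
    (F : EuclideanSpace ℝ (Fin d) → ℝ)
    (gradF : EuclideanSpace ℝ (Fin d) → EuclideanSpace ℝ (Fin d))
    (hsmooth : ∀ x y, F x - F y ≤ ⟪gradF y, x - y⟫ + L / 2 * ‖x - y‖ ^ 2)
    (θstar : EuclideanSpace ℝ (Fin d))
    (hmin : ∀ x, F θstar ≤ F x) (hgrad0 : gradF θstar = 0)
    (θbar : ℕ → Ω → EuclideanSpace ℝ (Fin d))
    (hFint : ∀ t, Integrable (fun ω => F (θbar t ω)) P)
    (hsqint : ∀ t, Integrable (fun ω => ‖θbar t ω - θstar‖ ^ 2) P)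
    (η δ : ℕ → ℝ)
    (hη : ∀ t, η t = 2 / (μ * (γ + t)))
    (hδ : ∀ t, δ t = ∫ ω, ‖θbar t ω - θstar‖ ^ 2 ∂P)
    (hrec : ∀ t, δ (t + 1) ≤ (1 - η t * μ) * δ t + η t ^ 2 * C) :
    ∀ t, (∫ ω, F (θbar t ω) ∂P) - F θstar ≤
      2 * L * max (4 * C) (μ ^ 2 * γ * δ 0) / (μ ^ 2 * (t + γ)) := by
  intro t
  have hγ1 : (1:ℝ) ≤ γ := le_trans (by exact_mod_cast Nat.one_le_cast.mpr hH) (le_trans (le_max_left _ _) hγ)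
  have hγ0 : (0:ℝ) < γ := lt_of_lt_of_le one_pos hγ1
  obtain ⟨ν, hν⟩ : ∃ ν : ℝ, ν = max (4*C/μ^2) (γ * δ 0) := ⟨_, rfl⟩
  have hν4C : 4*C/μ^2 ≤ ν := hν ▸ le_max_left _ _
  have hνγδ : γ * δ 0 ≤ ν := hν ▸ le_max_right _ _
  have hνnn : 0 ≤ ν := le_trans (by positivity) hν4C
  have hδnn : ∀ s, 0 ≤ δ s := by
    intro s; rw [hδ s]; exact integral_nonneg (fun ω => by positivity)
  have key : ∀ s : ℕ, δ s ≤ 4 * ν / (γ + s) := by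
    intro s
    induction s with
    | zero =>
      rw [Nat.cast_zero, add_zero, le_div_iff₀ hγ0]
      nlinarith [hδnn 0]
    | succ n ih =>
      have hg1 : (1:ℝ) ≤ γ + n := by
        have : (0:ℝ) ≤ n := Nat.cast_nonneg n
        linarith
      have hg0 : (0:ℝ) < γ + n := by linarith
      have hηn : η n * μ = 2 / (γ + n) := by
        rw [hη n]; field_simp
      have hη2 : η n ^ 2 * C ≤ ν / (γ + n) ^ 2 := by
        rw [hη n]
        have heq : (2 / (μ * (γ + n))) ^ 2 * C = (4 * C / μ ^ 2) / (γ + n) ^ 2 := by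
          field_simp; ring
        rw [heq]
        exact div_le_div_of_nonneg_right hν4C (by positivity)
      have hrecn := hrec n
      rw [hηn] at hrecn
      have hcast : ((n + 1 : ℕ) : ℝ) = (n : ℝ) + 1 := by push_cast; ring
      rw [hcast, show γ + ((n:ℝ) + 1) = (γ + n) + 1 by ring]
      calc δ (n + 1) ≤ (1 - 2 / (γ + n)) * δ n + ν / (γ + n) ^ 2 :=
            le_trans hrecn (by linarith)
        _ ≤ 4 * ν / ((γ + n) + 1) := rec_step_bound hνnn hg1 (hδnn n) ih
  have hptw : ∀ ω, F (θbar t ω) - F θstar ≤ L / 2 * ‖θbar t ω - θstar‖ ^ 2 := by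
    intro ω
    have := hsmooth (θbar t ω) θstar
    rw [hgrad0, inner_zero_left, zero_add] at this
    exact this
  have hint : (∫ ω, F (θbar t ω) ∂P) - F θstar ≤ L / 2 * δ t := by
    have h1 : (∫ ω, F (θbar t ω) ∂P) - F θstar
        = ∫ ω, (F (θbar t ω) - F θstar) ∂P := by
      rw [integral_sub (hFint t) (integrable_const _)]; simp
    rw [h1, hδ t, ← integral_const_mul]
    exact integral_mono ((hFint t).sub (integrable_const _))
      ((hsqint t).const_mul _) hptw
  have hfinal : L / 2 * δ t ≤ L / 2 * (4 * ν / (γ + t)) :=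
    mul_le_mul_of_nonneg_left (key t) (by positivity)
  have heq : 2 * L * max (4 * C) (μ ^ 2 * γ * δ 0) / (μ ^ 2 * (t + γ))
      = L / 2 * (4 * ν / (γ + t)) := by
    have hmax : max (4 * C) (μ ^ 2 * γ * δ 0) = μ ^ 2 * ν := by
      rw [hν, mul_max_of_nonneg _ _ (by positivity : (0:ℝ) ≤ μ^2)]
      congr 1
      · field_simp
      · ring
    rw [hmax]
    have hg0 : (0:ℝ) < γ + t := by positivity
    field_simp
    ring
  rw [heq]
  linarith
end

section
/- Let {δ_t} be nonnegative with δ_{t+1} ≤ (1 - η_t μ)δ_t + η_t²(C̃ + D), where C̃, D ≥ 0, μ > 0, η_t = 2/(μ(γ+t)), γ ≥ max(8L/μ, H), and let F be L-smooth with minimizer θ* and δ_t = E‖θ̄_t - θ*‖². Then E[F(θ̄_T)] - F(θ*) ≤ 2L·max(4(C̃+D), μ²γδ_0)/(μ²(T+γ)). -/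
open MeasureTheory ProbabilityTheory
open scoped RealInnerProductSpace

private lemma fading_aux (x y v C g μ2 : ℝ) (hx : 0 ≤ x) (hy : 0 ≤ y) (hv : 0 ≤ v)
    (hC4 : 4 * C ≤ v) (hμ2 : 0 < μ2) (hg : 1 ≤ g)
    (hB : x * (μ2 * g) ≤ 4 * v)
    (hA2 : y * (μ2 * g ^ 2) ≤ (g - 2) * (x * (μ2 * g)) + 4 * C) :
    y * (μ2 * (g + 1)) * g ^ 2 ≤ 4 * v * g ^ 2 := by
  have hg1 : (0:ℝ) ≤ g + 1 := by linarith
  by_cases hg2 : 2 ≤ g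
  · have h1 := mul_le_mul_of_nonneg_right hA2 hg1
    have h2 := mul_le_mul_of_nonneg_left hB
      (by nlinarith : (0:ℝ) ≤ (g - 2) * (g + 1))
    have h3 := mul_le_mul_of_nonneg_left hC4 hg1
    have h4 : 0 ≤ v * g := mul_nonneg hv (by linarith)
    nlinarith [h1, h2, h3, h4]
  · push_neg at hg2
    have hneg : (g - 2) * (x * (μ2 * g)) ≤ 0 :=
      mul_nonpos_of_nonpos_of_nonneg (by linarith)
        (mul_nonneg hx (by positivity))
    have h1 : y * (μ2 * g ^ 2) ≤ v := by linarith
    have h2 := mul_le_mul_of_nonneg_right h1 hg1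
    have h3 : 0 ≤ v * (4 * g ^ 2 - g - 1) :=
      mul_nonneg hv (by nlinarith)
    nlinarith [h2, h3]

/-- Theorem 3 of the paper (convergence of COTAF over fading MACs with partial
participation): the recursion `δ_{t+1} ≤ (1-η_tμ)δ_t + η_t²(C̃+D)` with
`η_t = 2/(μ(γ+t))`, `γ ≥ max(8L/μ, H)`, combined with `L`-smoothness, gives
`E[F(θ̄_T)] - F(θ*) ≤ 2L·max(4(C̃+D), μ²γδ₀)/(μ²(T+γ))`. -/
theorem fading_convergence_bound (d H : ℕ) (hH : 0 < H)
    (L μ γ Ctilde D : ℝ) (hL : 0 < L) (hμ : 0 < μ)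
    (hCtilde : 0 ≤ Ctilde) (hD : 0 ≤ D)
    (hγ : max (8 * L / μ) (H : ℝ) ≤ γ)
    {Ω : Type*} [MeasurableSpace Ω] (P : Measure Ω) [IsProbabilityMeasure P]
    (F : EuclideanSpace ℝ (Fin d) → ℝ)
    (gradF : EuclideanSpace ℝ (Fin d) → EuclideanSpace ℝ (Fin d))
    (hsmooth : ∀ x y, F x - F y ≤ ⟪gradF y, x - y⟫ + L / 2 * ‖x - y‖ ^ 2)
    (θstar : EuclideanSpace ℝ (Fin d))
    (hmin : ∀ x, F θstar ≤ F x) (hgrad0 : gradF θstar = 0)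
    (θbar : ℕ → Ω → EuclideanSpace ℝ (Fin d))
    (hFint : ∀ t, Integrable (fun ω => F (θbar t ω)) P)
    (hsqint : ∀ t, Integrable (fun ω => ‖θbar t ω - θstar‖ ^ 2) P)
    (η δ : ℕ → ℝ)
    (hη : ∀ t, η t = 2 / (μ * (γ + t)))
    (hδ : ∀ t, δ t = ∫ ω, ‖θbar t ω - θstar‖ ^ 2 ∂P)
    (hδpos : ∀ t, 0 ≤ δ t)
    (hrec : ∀ t, δ (t + 1) ≤ (1 - η t * μ) * δ t + η t ^ 2 * (Ctilde + D)) :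
    ∀ T, (∫ ω, F (θbar T ω) ∂P) - F θstar ≤
      2 * L * max (4 * (Ctilde + D)) (μ ^ 2 * γ * δ 0) / (μ ^ 2 * (T + γ)) := by
  intro T
  set v := max (4 * (Ctilde + D)) (μ ^ 2 * γ * δ 0) with hv
  have hγ1 : (1:ℝ) ≤ γ := le_trans (by exact_mod_cast hH) (le_trans (le_max_right _ _) hγ)
  have hγpos : (0:ℝ) < γ := lt_of_lt_of_le one_pos hγ1
  have hμ2 : (0:ℝ) < μ ^ 2 := by positivity
  have hvC : 4 * (Ctilde + D) ≤ v := le_max_left _ _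
  have hv0 : (0:ℝ) ≤ v := le_trans (by linarith) hvC
  have key : ∀ t : ℕ, δ t ≤ 4 * v / (μ ^ 2 * (γ + t)) := by
    intro t
    induction t with
    | zero =>
      rw [le_div_iff₀ (by positivity)]
      push_cast
      have h1 : μ ^ 2 * γ * δ 0 ≤ v := le_max_right _ _
      nlinarith [hδpos 0]
    | succ t ih =>
      have hgpos : (0:ℝ) < γ + t := by positivity
      have hg1 : (1:ℝ) ≤ γ + t := by
        have : (0:ℝ) ≤ (t:ℝ) := Nat.cast_nonneg t
        linarith
      set g : ℝ := γ + (t:ℝ) with hgdef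
      have hA := hrec t
      rw [hη t] at hA
      have hx0 : 0 ≤ δ t := hδpos t
      have hy0 : 0 ≤ δ (t+1) := hδpos (t+1)
      have hB : δ t * (μ ^ 2 * g) ≤ 4 * v := by
        rw [le_div_iff₀ (by positivity : (0:ℝ) < μ ^ 2 * g)] at ih
        exact ih
      have hexp : ((1 - 2 / (μ * g) * μ) * δ t + (2 / (μ * g)) ^ 2 * (Ctilde + D)) * (μ ^ 2 * g ^ 2)
          = (g - 2) * (δ t * (μ ^ 2 * g)) + 4 * (Ctilde + D) := by
        field_simp
        ring
      have hA2 : δ (t+1) * (μ ^ 2 * g ^ 2) ≤ (g - 2) * (δ t * (μ ^ 2 * g)) + 4 * (Ctilde + D) := by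
        calc δ (t+1) * (μ ^ 2 * g ^ 2)
            ≤ ((1 - 2 / (μ * g) * μ) * δ t + (2 / (μ * g)) ^ 2 * (Ctilde + D)) * (μ ^ 2 * g ^ 2) :=
              mul_le_mul_of_nonneg_right hA (by positivity)
          _ = _ := hexp
      have hcast : (γ + ((t:ℕ)+1:ℕ)) = g + 1 := by push_cast; ring
      rw [hcast, le_div_iff₀ (by positivity : (0:ℝ) < μ ^ 2 * (g + 1))]
      have hgoal2 : δ (t+1) * (μ ^ 2 * (g + 1)) * g ^ 2 ≤ 4 * v * g ^ 2 :=
        fading_aux (δ t) (δ (t+1)) v (Ctilde + D) g (μ ^ 2)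
          hx0 hy0 hv0 hvC hμ2 hg1 hB hA2
      exact le_of_mul_le_mul_right hgoal2 (by positivity)
  -- pointwise smoothness bound at θstar
  have hpt : ∀ ω, F (θbar T ω) ≤ F θstar + L / 2 * ‖θbar T ω - θstar‖ ^ 2 := by
    intro ω
    have := hsmooth (θbar T ω) θstar
    rw [hgrad0, inner_zero_left] at this
    linarith
  have hint : (∫ ω, F (θbar T ω) ∂P) ≤ F θstar + L / 2 * δ T := by
    have h1 : (∫ ω, F (θbar T ω) ∂P) ≤ ∫ ω, (F θstar + L / 2 * ‖θbar T ω - θstar‖ ^ 2) ∂P :=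
      integral_mono (hFint T) ((integrable_const _).add ((hsqint T).const_mul _)) hpt
    have h2 : (∫ ω, (F θstar + L / 2 * ‖θbar T ω - θstar‖ ^ 2) ∂P)
        = F θstar + L / 2 * δ T := by
      rw [integral_add (integrable_const _) ((hsqint T).const_mul _),
        integral_const, integral_const_mul, hδ T]
      simp
    linarith [h1, h2.le, h2.ge]
  have hT := key T
  have hfinal : L / 2 * (4 * v / (μ ^ 2 * (γ + T))) = 2 * L * v / (μ ^ 2 * (T + γ)) := by
    rw [show (T:ℝ) + γ = γ + T by ring]
    ring
  have := mul_le_mul_of_nonneg_left hT (by linarith : (0:ℝ) ≤ L / 2)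
  rw [hfinal] at this
  linarith
end
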